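/- Let p ≥ 2, q = p/(p−1), δ = q(q−1)/8 and n ∈ ℕ. There exists a constant C > 0 depending only on p such that for every κ ∈ (0,1) and every (ζ,η) ∈ ℝ × ℝⁿ the mollified Bellman function Q_κ = ψ_κ * Q satisfies |∂_ζ Q_κ(ζ,η)| ≤ C·max{(|ζ|+κ)^{p−1}, |η|+κ} and |∇_η Q_κ(ζ,η)| ≤ C·(|η|+κ)^{q−1}, where ∂_ζ Q_κ is the partial derivative in the first (scalar) variable and ∇_η Q_κ the gradient in the ℝⁿ variable. -/

import Mathlib

/-!
`Q_κ(ξ) = ∫ ψ_κ(y) Q(ξ - y) dy` averages translates of `Q` against a probability density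
supported in the ball of radius `κ`, so a Lipschitz bound for `Q` that holds uniformly on that
ball passes to `Q_κ`, and a local Lipschitz constant bounds the derivative.
Off the interface `u ^ p = v ^ q` the partial derivatives of `β` are explicit. On the side
`u ^ p ≤ v ^ q`, i.e. `u ≤ v ^ (q - 1)`, the cross term `δ u² v^(2-q)` contributes at most
`v` to `∂_u β` and at most `v ^ (q - 1)` to `∂_v β`; on the other side `β` is a combination of
`u ^ p` and `v ^ q`. As the two pieces agree on the interface, `(p + 1)(R ^ (p - 1) + v)` and
`(q + 1) V ^ (q - 1)` are Lipschitz constants of `β` in each variable on `[0, R]` and `[0, V]`.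
Taking `R = |ζ| + 2κ` and `V = |η| + 2κ` gives the theorem.
-/

open Real MeasureTheory

/-- The Nazarov–Treil Bellman auxiliary function `β`. -/
noncomputable def bell (p : ℝ) (u v : ℝ) : ℝ :=
  if u ^ p ≤ v ^ (p / (p - 1)) then
    u ^ p + v ^ (p / (p - 1)) +
      (p / (p - 1)) * (p / (p - 1) - 1) / 8 * (u ^ (2 : ℝ) * v ^ (2 - p / (p - 1)))
  else
    u ^ p + v ^ (p / (p - 1)) +
      (p / (p - 1)) * (p / (p - 1) - 1) / 8 *
        ((2 / p) * u ^ p + (2 / (p / (p - 1)) - 1) * v ^ (p / (p - 1)))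

/-- The Nazarov–Treil Bellman function `Q(ζ,η) = (1/2) β(|ζ|,|η|)` on `ℝ × ℝⁿ`. -/
noncomputable def bellQ (p : ℝ) (n : ℕ) (ξ : ℝ × EuclideanSpace ℝ (Fin n)) : ℝ :=
  (1 / 2) * bell p |ξ.1| ‖ξ.2‖

/-- The Euclidean norm on `ℝ × ℝⁿ ≅ ℝ^{n+1}`. -/
noncomputable def eNorm (n : ℕ) (x : ℝ × EuclideanSpace ℝ (Fin n)) : ℝ :=
  Real.sqrt (x.1 ^ 2 + ‖x.2‖ ^ 2)

/-- The mollifier `ψ(x) = c e^{-1/(1-|x|²)}` for `|x| < 1`, `ψ(x) = 0` otherwise,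
where `|·|` is the Euclidean norm of `ℝ^{n+1} ≅ ℝ × ℝⁿ`. -/
noncomputable def moll (n : ℕ) (c : ℝ) (x : ℝ × EuclideanSpace ℝ (Fin n)) : ℝ :=
  if eNorm n x < 1 then c * Real.exp (-(1 / (1 - eNorm n x ^ 2))) else 0

/-- The rescaled mollifier `ψ_κ(x) = κ^{-(n+1)} ψ(x/κ)`. -/
noncomputable def mollScaled (n : ℕ) (c κ : ℝ) (x : ℝ × EuclideanSpace ℝ (Fin n)) : ℝ :=
  (κ ^ (n + 1))⁻¹ * moll n c (κ⁻¹ • x)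

/-- The mollified Bellman function `Q_κ = ψ_κ * Q` (convolution on `ℝ^{n+1} ≅ ℝ × ℝⁿ`). -/
noncomputable def bellQκ (p : ℝ) (n : ℕ) (c κ : ℝ)
    (ξ : ℝ × EuclideanSpace ℝ (Fin n)) : ℝ :=
  ∫ y, mollScaled n c κ y * bellQ p n (ξ - y)

/-- The Hessian quadratic form `H_Φ(ω; x) = ⟨Hess Φ(ω) x, x⟩`, realised as the second
iterated Fréchet derivative evaluated at `(x, x)`. -/
noncomputable def hessQF {E : Type*} [NormedAddCommGroup E] [NormedSpace ℝ E]
    (Φ : E → ℝ) (ω : E) (x : E) : ℝ :=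
  iteratedFDeriv ℝ 2 Φ ω ![x, x]

open Set Function

namespace Real.HolderConjugate

variable {p q u v : ℝ}

lemma le_two (hpq : p.HolderConjugate q) (hp : 2 ≤ p) : q ≤ 2 := by
  have h : 2⁻¹ ≤ q⁻¹ := by
    linarith [hpq.inv_add_inv_eq_one, inv_anti₀ (by norm_num : (0 : ℝ) < 2) hp]
  exact (inv_le_inv₀ (by norm_num) hpq.symm.pos).1 h

lemma rpow_eq_rpow_sub_one_rpow (hpq : p.HolderConjugate q) (hv : 0 ≤ v) :
    v ^ q = (v ^ (q - 1)) ^ p := by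
  rw [← Real.rpow_mul hv, hpq.symm.sub_one_mul_conj]

lemma rpow_le_rpow_iff_le_rpow_sub_one (hpq : p.HolderConjugate q) (hu : 0 ≤ u) (hv : 0 ≤ v) :
    u ^ p ≤ v ^ q ↔ u ≤ v ^ (q - 1) := by
  rw [hpq.rpow_eq_rpow_sub_one_rpow hv,
    Real.rpow_le_rpow_iff hu (Real.rpow_nonneg hv _) hpq.pos]

lemma rpow_le_rpow_iff_rpow_sub_one_le (hpq : p.HolderConjugate q) (hu : 0 ≤ u) (hv : 0 ≤ v) :
    v ^ q ≤ u ^ p ↔ v ^ (q - 1) ≤ u := by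
  rw [hpq.rpow_eq_rpow_sub_one_rpow hv,
    Real.rpow_le_rpow_iff (Real.rpow_nonneg hv _) hu hpq.pos]

lemma mul_rpow_two_sub_le (hpq : p.HolderConjugate q) (hu : 0 ≤ u) (hv : 0 ≤ v)
    (h : u ^ p ≤ v ^ q) : u * v ^ (2 - q) ≤ v := calc
  u * v ^ (2 - q) ≤ v ^ (q - 1) * v ^ (2 - q) := by
    gcongr
    exact (hpq.rpow_le_rpow_iff_le_rpow_sub_one hu hv).1 h
  _ = v := by rw [← Real.rpow_add' hv (by norm_num)]; norm_num

lemma sq_mul_rpow_one_sub_le (hpq : p.HolderConjugate q) (hu : 0 ≤ u) (hv : 0 ≤ v)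
    (h : u ^ p ≤ v ^ q) : u ^ 2 * v ^ (1 - q) ≤ v ^ (q - 1) := calc
  u ^ 2 * v ^ (1 - q) ≤ (v ^ (q - 1)) ^ 2 * v ^ (1 - q) := by
    gcongr
    exact (hpq.rpow_le_rpow_iff_le_rpow_sub_one hu hv).1 h
  _ = v ^ (q - 1) := by
    rw [← Real.rpow_mul_natCast hv, ← Real.rpow_add' hv (by push_cast; linarith [hpq.symm.lt])]
    ring_nf

/-- On the interface `u ^ p = v ^ q` the two pieces of the Bellman function agree. -/
lemma sq_mul_rpow_two_sub_eq (hpq : p.HolderConjugate q) (hu : 0 ≤ u) (hv : 0 ≤ v)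
    (h : u ^ p = v ^ q) : u ^ 2 * v ^ (2 - q) = 2 / p * u ^ p + (2 / q - 1) * v ^ q := by
  have hu' : u = v ^ (q - 1) := by
    rwa [hpq.rpow_eq_rpow_sub_one_rpow hv,
      Real.rpow_left_inj hu (Real.rpow_nonneg hv _) hpq.ne_zero] at h
  have hpq' : 2 / p + 2 / q - 1 = 1 := by linear_combination 2 * hpq.inv_add_inv_eq_one
  calc u ^ 2 * v ^ (2 - q) = v ^ ((q - 1) * (2 : ℕ) + (2 - q)) := by
        rw [hu', ← Real.rpow_mul_natCast hv,
          Real.rpow_add' hv (by push_cast; ring_nf; exact hpq.symm.ne_zero)]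
    _ = (2 / p + 2 / q - 1) * v ^ q := by rw [hpq', one_mul]; push_cast; ring_nf
    _ = 2 / p * u ^ p + (2 / q - 1) * v ^ q := by rw [h]; ring

end Real.HolderConjugate

section Bell

variable {p q : ℝ}

lemma bell_eq_ite (hpq : p.HolderConjugate q) (u v : ℝ) :
    bell p u v = if u ^ p ≤ v ^ q then u ^ p + v ^ q + q * (q - 1) / 8 * (u ^ 2 * v ^ (2 - q))
      else u ^ p + v ^ q + q * (q - 1) / 8 * (2 / p * u ^ p + (2 / q - 1) * v ^ q) := by
  rw [bell, ← hpq.conjugate_eq, Real.rpow_two]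

lemma bell_of_le (hpq : p.HolderConjugate q) {u v : ℝ} (h : u ^ p ≤ v ^ q) :
    bell p u v = u ^ p + v ^ q + q * (q - 1) / 8 * (u ^ 2 * v ^ (2 - q)) := by
  rw [bell_eq_ite hpq, if_pos h]

lemma bell_of_ge (hpq : p.HolderConjugate q) {u v : ℝ} (hu : 0 ≤ u) (hv : 0 ≤ v)
    (h : v ^ q ≤ u ^ p) :
    bell p u v = u ^ p + v ^ q + q * (q - 1) / 8 * (2 / p * u ^ p + (2 / q - 1) * v ^ q) := by
  rw [bell_eq_ite hpq]
  split_ifs with h'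
  · rw [hpq.sq_mul_rpow_two_sub_eq hu hv (le_antisymm h' h)]
  · rfl

lemma bell_coeff_mem (hpq : p.HolderConjugate q) (hp : 2 ≤ p) :
    q * (q - 1) / 8 ∈ Icc (0 : ℝ) (1 / 4) := by
  have h1 := hpq.symm.lt
  have h2 := hpq.le_two hp
  constructor <;> nlinarith

lemma continuous_bell_abs_norm {E : Type*} [NormedAddCommGroup E] (hpq : p.HolderConjugate q)
    (hp : 2 ≤ p) : Continuous fun x : ℝ × E => bell p |x.1| ‖x.2‖ := by
  have cp := Real.continuous_rpow_const hpq.nonneg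
  have cq := Real.continuous_rpow_const hpq.symm.nonneg
  have c2q := Real.continuous_rpow_const (sub_nonneg.2 (hpq.le_two hp))
  have cu : Continuous fun x : ℝ × E => |x.1| := by fun_prop
  have cv : Continuous fun x : ℝ × E => ‖x.2‖ := by fun_prop
  simp only [bell_eq_ite hpq]
  refine Continuous.if_le (by fun_prop) (by fun_prop) (cp.comp cu) (cq.comp cv) fun x h => ?_
  rw [hpq.sq_mul_rpow_two_sub_eq (abs_nonneg x.1) (norm_nonneg x.2) h]

end Bell

lemma LipschitzOnWith.Icc_union_Icc {α : Type*} [PseudoMetricSpace α] {f : ℝ → α} {K : NNReal}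
    {a b c : ℝ} (hab : a ≤ b) (hbc : b ≤ c) (h₁ : LipschitzOnWith K f (Icc a b))
    (h₂ : LipschitzOnWith K f (Icc b c)) : LipschitzOnWith K f (Icc a c) := by
  have key : ∀ x ∈ Icc a c, ∀ y ∈ Icc a c, x ≤ y → dist (f x) (f y) ≤ K * dist x y := by
    intro x hx y hy hxy
    rcases le_total y b with hyb | hby
    · exact h₁.dist_le_mul x ⟨hx.1, hxy.trans hyb⟩ y ⟨hy.1, hyb⟩
    rcases le_total b x with hbx | hxb
    · exact h₂.dist_le_mul x ⟨hbx, hx.2⟩ y ⟨hby, hy.2⟩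
    calc dist (f x) (f y) ≤ dist (f x) (f b) + dist (f b) (f y) := dist_triangle _ _ _
      _ ≤ K * dist x b + K * dist b y := add_le_add
          (h₁.dist_le_mul x ⟨hx.1, hxb⟩ b ⟨hab, le_rfl⟩)
          (h₂.dist_le_mul b ⟨le_rfl, hbc⟩ y ⟨hby, hy.2⟩)
      _ = K * dist x y := by
          rw [Real.dist_eq, Real.dist_eq, Real.dist_eq, abs_of_nonpos (by linarith),
            abs_of_nonpos (by linarith), abs_of_nonpos (by linarith)]
          ring
  refine LipschitzOnWith.of_dist_le_mul fun x hx y hy => ?_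
  rcases le_total x y with hxy | hyx
  · exact key x hx y hy hxy
  · rw [dist_comm, dist_comm x]
    exact key y hy x hx hyx

lemma LipschitzOnWith.Icc_of_eqOn_of_hasDerivAt {f g g' : ℝ → ℝ} {a b K : ℝ}
    (hfg : EqOn f g (Icc a b)) (hg : ∀ x ∈ Icc a b, HasDerivAt g (g' x) x)
    (hbound : ∀ x ∈ Icc a b, |g' x| ≤ K) : LipschitzOnWith K.toNNReal f (Icc a b) := by
  refine (convex_Icc a b).lipschitzOnWith_of_nnnorm_hasDerivWithin_le
    (fun x hx => (hg x hx).hasDerivWithinAt.congr_of_mem hfg hx) fun x hx => ?_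
  rw [← NNReal.coe_le_coe, coe_nnnorm, Real.norm_eq_abs]
  exact (hbound x hx).trans (Real.le_coe_toNNReal K)

section BellLipschitz

variable {p q : ℝ}

lemma bell_lipschitzOnWith_fst_below (hpq : p.HolderConjugate q) (hp : 2 ≤ p) {v R b : ℝ}
    (hv : 0 ≤ v) (hbR : b ≤ R) (hb : b ≤ v ^ (q - 1)) :
    LipschitzOnWith ((p + 1) * (R ^ (p - 1) + v)).toNNReal (fun u => bell p u v) (Icc 0 b) := by
  set δ := q * (q - 1) / 8
  obtain ⟨hδ0, hδ1⟩ : δ ∈ Icc 0 (1 / 4) := bell_coeff_mem hpq hp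
  have hA : ∀ u ∈ Icc 0 b, u ^ p ≤ v ^ q := fun u hu =>
    (hpq.rpow_le_rpow_iff_le_rpow_sub_one hu.1 hv).2 (hu.2.trans hb)
  refine LipschitzOnWith.Icc_of_eqOn_of_hasDerivAt (fun u hu => bell_of_le hpq (hA u hu))
    (fun u _ => (((Real.hasDerivAt_rpow_const (Or.inr (by linarith))).add_const _).add
      (((hasDerivAt_pow 2 u).mul_const _).const_mul δ))) fun u hu => ?_
  have h1 : u ^ (p - 1) ≤ R ^ (p - 1) := Real.rpow_le_rpow hu.1 (hu.2.trans hbR) (by linarith)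
  have h2 : u * v ^ (2 - q) ≤ v := hpq.mul_rpow_two_sub_le hu.1 hv (hA u hu)
  have h3 : 0 ≤ u ^ (p - 1) := Real.rpow_nonneg hu.1 _
  have h4 : 0 ≤ u * v ^ (2 - q) := mul_nonneg hu.1 (Real.rpow_nonneg hv _)
  have h5 : p * u ^ (p - 1) + δ * (((2 : ℕ) : ℝ) * u ^ (2 - 1) * v ^ (2 - q))
      = p * u ^ (p - 1) + 2 * δ * (u * v ^ (2 - q)) := by push_cast; ring
  rw [h5, abs_of_nonneg (by positivity)]
  nlinarith [mul_le_mul_of_nonneg_left h1 (by linarith : (0 : ℝ) ≤ p),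
    mul_le_mul_of_nonneg_left h2 hδ0]

lemma bell_lipschitzOnWith_fst_above (hpq : p.HolderConjugate q) (hp : 2 ≤ p) {v R a : ℝ}
    (hv : 0 ≤ v) (ha : v ^ (q - 1) ≤ a) :
    LipschitzOnWith ((p + 1) * (R ^ (p - 1) + v)).toNNReal (fun u => bell p u v) (Icc a R) := by
  set δ := q * (q - 1) / 8
  obtain ⟨hδ0, hδ1⟩ : δ ∈ Icc 0 (1 / 4) := bell_coeff_mem hpq hp
  have ha0 : 0 ≤ a := (Real.rpow_nonneg hv _).trans ha
  have hB : ∀ u ∈ Icc a R, v ^ q ≤ u ^ p := fun u hu =>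
    (hpq.rpow_le_rpow_iff_rpow_sub_one_le (ha0.trans hu.1) hv).2 (ha.trans hu.1)
  have hderiv : ∀ u, HasDerivAt (fun u : ℝ => u ^ p) (p * u ^ (p - 1)) u := fun u =>
    Real.hasDerivAt_rpow_const (Or.inr (by linarith))
  refine LipschitzOnWith.Icc_of_eqOn_of_hasDerivAt
    (fun u hu => bell_of_ge hpq (ha0.trans hu.1) hv (hB u hu))
    (fun u _ => (((hderiv u).add_const _).add
      ((((hderiv u).const_mul _).add_const _).const_mul δ))) fun u hu => ?_
  have h1 : u ^ (p - 1) ≤ R ^ (p - 1) := Real.rpow_le_rpow (ha0.trans hu.1) hu.2 (by linarith)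
  have h3 : 0 ≤ u ^ (p - 1) := Real.rpow_nonneg (ha0.trans hu.1) _
  have h5 : p * u ^ (p - 1) + δ * (2 / p * (p * u ^ (p - 1)))
      = (p + 2 * δ) * u ^ (p - 1) := by
    field_simp [hpq.ne_zero]
  rw [h5, abs_of_nonneg (by positivity)]
  nlinarith [mul_le_mul (by linarith : p + 2 * δ ≤ p + 1) h1 h3 (by linarith), h3.trans h1]

lemma bell_lipschitzOnWith_fst (hpq : p.HolderConjugate q) (hp : 2 ≤ p) {v R : ℝ} (hv : 0 ≤ v) :
    LipschitzOnWith ((p + 1) * (R ^ (p - 1) + v)).toNNReal (fun u => bell p u v) (Icc 0 R) := by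
  rcases le_total (v ^ (q - 1)) R with h | h
  · exact (bell_lipschitzOnWith_fst_below hpq hp hv h le_rfl).Icc_union_Icc
      (Real.rpow_nonneg hv _) h (bell_lipschitzOnWith_fst_above hpq hp hv le_rfl)
  · exact bell_lipschitzOnWith_fst_below hpq hp hv le_rfl h

lemma bell_lipschitzOnWith_snd_below (hpq : p.HolderConjugate q) (hp : 2 ≤ p) {u V b : ℝ}
    (hu : 0 ≤ u) (hbV : b ≤ V) (hb : b ≤ u ^ (p - 1)) :
    LipschitzOnWith ((q + 1) * V ^ (q - 1)).toNNReal (fun v => bell p u v) (Icc 0 b) := by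
  set δ := q * (q - 1) / 8
  obtain ⟨hδ0, hδ1⟩ : δ ∈ Icc 0 (1 / 4) := bell_coeff_mem hpq hp
  have hq1 := hpq.symm.lt
  have hq2 := hpq.le_two hp
  have hB : ∀ v ∈ Icc 0 b, v ^ q ≤ u ^ p := fun v hv =>
    (hpq.symm.rpow_le_rpow_iff_le_rpow_sub_one hv.1 hu).2 (hv.2.trans hb)
  have hderiv : ∀ v, HasDerivAt (fun v : ℝ => v ^ q) (q * v ^ (q - 1)) v := fun v =>
    Real.hasDerivAt_rpow_const (Or.inr hq1.le)
  refine LipschitzOnWith.Icc_of_eqOn_of_hasDerivAt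
    (fun v hv => bell_of_ge hpq hu hv.1 (hB v hv))
    (fun v _ => (((hderiv v).const_add _).add
      ((((hderiv v).const_mul _).const_add _).const_mul δ))) fun v hv => ?_
  have h1 : v ^ (q - 1) ≤ V ^ (q - 1) := Real.rpow_le_rpow hv.1 (hv.2.trans hbV) (by linarith)
  have h3 : 0 ≤ v ^ (q - 1) := Real.rpow_nonneg hv.1 _
  have h5 : q * v ^ (q - 1) + δ * ((2 / q - 1) * (q * v ^ (q - 1)))
      = (q + δ * (2 - q)) * v ^ (q - 1) := by
    field_simp [hpq.symm.ne_zero]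
  rw [h5, abs_of_nonneg (mul_nonneg (by nlinarith) h3)]
  exact mul_le_mul (by nlinarith) h1 h3 (by linarith)

lemma bell_lipschitzOnWith_snd_above (hpq : p.HolderConjugate q) (hp : 2 ≤ p) {u V a : ℝ}
    (hu : 0 ≤ u) (ha0 : 0 < a) (ha : u ^ (p - 1) ≤ a) :
    LipschitzOnWith ((q + 1) * V ^ (q - 1)).toNNReal (fun v => bell p u v) (Icc a V) := by
  set δ := q * (q - 1) / 8
  obtain ⟨hδ0, hδ1⟩ : δ ∈ Icc 0 (1 / 4) := bell_coeff_mem hpq hp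
  have hq1 := hpq.symm.lt
  have hq2 := hpq.le_two hp
  have hA : ∀ v ∈ Icc a V, u ^ p ≤ v ^ q := fun v hv =>
    (hpq.symm.rpow_le_rpow_iff_rpow_sub_one_le (ha0.le.trans hv.1) hu).2 (ha.trans hv.1)
  refine LipschitzOnWith.Icc_of_eqOn_of_hasDerivAt (fun v hv => bell_of_le hpq (hA v hv))
    (fun v hv => ((Real.hasDerivAt_rpow_const (Or.inr hq1.le)).const_add _).add
      (((Real.hasDerivAt_rpow_const (Or.inl (ha0.trans_le hv.1).ne')).const_mul _).const_mul
        δ)) fun v hv => ?_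
  have hv0 : 0 ≤ v := ha0.le.trans hv.1
  have h1 : v ^ (q - 1) ≤ V ^ (q - 1) := Real.rpow_le_rpow hv0 hv.2 (by linarith)
  have h2 : u ^ 2 * v ^ (1 - q) ≤ v ^ (q - 1) := hpq.sq_mul_rpow_one_sub_le hu hv0 (hA v hv)
  have h3 : 0 ≤ u ^ 2 * v ^ (1 - q) := mul_nonneg (sq_nonneg u) (Real.rpow_nonneg hv0 _)
  have h4 : 0 ≤ v ^ (q - 1) := Real.rpow_nonneg hv0 _
  have h5 : q * v ^ (q - 1) + δ * (u ^ 2 * ((2 - q) * v ^ (2 - q - 1)))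
      = q * v ^ (q - 1) + δ * (2 - q) * (u ^ 2 * v ^ (1 - q)) := by ring_nf
  have h6 : 0 ≤ δ * (2 - q) := mul_nonneg hδ0 (by linarith)
  rw [h5, abs_of_nonneg (by positivity)]
  nlinarith [mul_le_mul (by nlinarith : δ * (2 - q) ≤ 1) (h2.trans h1) h3 zero_le_one]

lemma bell_lipschitzOnWith_snd (hpq : p.HolderConjugate q) (hp : 2 ≤ p) {u V : ℝ} (hu : 0 ≤ u) :
    LipschitzOnWith ((q + 1) * V ^ (q - 1)).toNNReal (fun v => bell p u v) (Icc 0 V) := by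
  rcases hu.eq_or_lt with rfl | hu0
  · -- `v ↦ v ^ (2 - q)` need not be differentiable at `0`, but its coefficient vanishes here.
    have h0 : (0 : ℝ) ^ p = 0 := Real.zero_rpow hpq.ne_zero
    refine LipschitzOnWith.Icc_of_eqOn_of_hasDerivAt (fun v hv => ?_)
      (fun v _ => Real.hasDerivAt_rpow_const (Or.inr hpq.symm.lt.le)) fun v hv => ?_
    · rw [bell_of_le hpq (by rw [h0]; exact Real.rpow_nonneg hv.1 _), h0]
      ring
    · have h1 := Real.rpow_le_rpow hv.1 hv.2 (sub_nonneg.2 hpq.symm.lt.le)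
      have h2 := Real.rpow_nonneg hv.1 (q - 1)
      rw [abs_of_nonneg (mul_nonneg hpq.symm.nonneg h2)]
      nlinarith [hpq.symm.pos]
  have hv₀ : 0 < u ^ (p - 1) := Real.rpow_pos_of_pos hu0 _
  rcases le_total (u ^ (p - 1)) V with h | h
  · exact (bell_lipschitzOnWith_snd_below hpq hp hu h le_rfl).Icc_union_Icc hv₀.le h
      (bell_lipschitzOnWith_snd_above hpq hp hu hv₀ le_rfl)
  · exact bell_lipschitzOnWith_snd_below hpq hp hu le_rfl h

end BellLipschitz

section BellQ

variable {p q : ℝ} {n : ℕ}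

lemma continuous_bellQ (hpq : p.HolderConjugate q) (hp : 2 ≤ p) : Continuous (bellQ p n) :=
  continuous_const.mul (continuous_bell_abs_norm hpq hp)

lemma abs_bellQ_sub_le (ξ ξ' : ℝ × EuclideanSpace ℝ (Fin n)) :
    |bellQ p n ξ - bellQ p n ξ'| ≤ |bell p |ξ.1| ‖ξ.2‖ - bell p |ξ'.1| ‖ξ'.2‖| := by
  rw [bellQ, bellQ, ← mul_sub, abs_mul, abs_of_pos one_half_pos]
  linarith [abs_nonneg (bell p |ξ.1| ‖ξ.2‖ - bell p |ξ'.1| ‖ξ'.2‖)]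

lemma abs_bellQ_sub_fst_le (hpq : p.HolderConjugate q) (hp : 2 ≤ p) {a b R W : ℝ}
    {w : EuclideanSpace ℝ (Fin n)} (ha : |a| ≤ R) (hb : |b| ≤ R) (hw : ‖w‖ ≤ W) :
    |bellQ p n (a, w) - bellQ p n (b, w)| ≤ (p + 1) * (R ^ (p - 1) + W) * |a - b| := by
  have hK : 0 ≤ (p + 1) * (R ^ (p - 1) + ‖w‖) := by
    have := Real.rpow_nonneg ((abs_nonneg a).trans ha) (p - 1)
    have := norm_nonneg w
    nlinarith
  have hlip := (bell_lipschitzOnWith_fst hpq hp (norm_nonneg w)).dist_le_mul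
    |a| ⟨abs_nonneg a, ha⟩ |b| ⟨abs_nonneg b, hb⟩
  rw [Real.dist_eq, Real.dist_eq, Real.coe_toNNReal _ hK] at hlip
  calc |bellQ p n (a, w) - bellQ p n (b, w)| ≤ |bell p |a| ‖w‖ - bell p |b| ‖w‖| :=
        abs_bellQ_sub_le _ _
    _ ≤ (p + 1) * (R ^ (p - 1) + ‖w‖) * |a - b| :=
        hlip.trans (mul_le_mul_of_nonneg_left (abs_abs_sub_abs_le_abs_sub a b) hK)
    _ ≤ (p + 1) * (R ^ (p - 1) + W) * |a - b| := by gcongr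

lemma abs_bellQ_sub_snd_le (hpq : p.HolderConjugate q) (hp : 2 ≤ p) (a : ℝ) {V : ℝ}
    {w w' : EuclideanSpace ℝ (Fin n)} (hw : ‖w‖ ≤ V) (hw' : ‖w'‖ ≤ V) :
    |bellQ p n (a, w) - bellQ p n (a, w')| ≤ (q + 1) * V ^ (q - 1) * ‖w - w'‖ := by
  have hK : 0 ≤ (q + 1) * V ^ (q - 1) :=
    mul_nonneg (by linarith [hpq.symm.pos]) (Real.rpow_nonneg ((norm_nonneg w).trans hw) _)
  have hlip := (bell_lipschitzOnWith_snd hpq hp (abs_nonneg a)).dist_le_mul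
    ‖w‖ ⟨norm_nonneg w, hw⟩ ‖w'‖ ⟨norm_nonneg w', hw'⟩
  rw [Real.dist_eq, Real.dist_eq, Real.coe_toNNReal _ hK] at hlip
  exact (abs_bellQ_sub_le _ _).trans
    (hlip.trans (mul_le_mul_of_nonneg_left (abs_norm_sub_norm_le w w') hK))

end BellQ

lemma abs_integral_mul_sub_integral_mul_le {α : Type*} [MeasurableSpace α] {μ : Measure α}
    {ψ f g : α → ℝ} {s : Set α} {K : ℝ} (hψ : ∀ y, 0 ≤ ψ y) (hψ1 : ∫ y, ψ y ∂μ = 1)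
    (hψs : support ψ ⊆ s) (hf : Integrable (fun y => ψ y * f y) μ)
    (hg : Integrable (fun y => ψ y * g y) μ) (hfg : ∀ y ∈ s, |f y - g y| ≤ K) :
    |∫ y, ψ y * f y ∂μ - ∫ y, ψ y * g y ∂μ| ≤ K := by
  have hψint : Integrable ψ μ := Integrable.of_integral_ne_zero (by simp [hψ1])
  have hpt : ∀ y, ‖ψ y * f y - ψ y * g y‖ ≤ ψ y * K := fun y => by
    rw [← mul_sub, norm_mul, Real.norm_of_nonneg (hψ y), Real.norm_eq_abs]
    by_cases hy : y ∈ s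
    · exact mul_le_mul_of_nonneg_left (hfg y hy) (hψ y)
    · rw [notMem_support.1 fun h => hy (hψs h), zero_mul, zero_mul]
  rw [← integral_sub hf hg, ← Real.norm_eq_abs]
  calc ‖∫ y, (ψ y * f y - ψ y * g y) ∂μ‖ ≤ ∫ y, ψ y * K ∂μ :=
        norm_integral_le_of_norm_le (hψint.mul_const K) (ae_of_all _ hpt)
    _ = K := by rw [integral_mul_const, hψ1, one_mul]

section Mollifier

variable {n : ℕ} {c κ : ℝ}

lemma norm_le_eNorm (x : ℝ × EuclideanSpace ℝ (Fin n)) : ‖x‖ ≤ eNorm n x := by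
  rw [Prod.norm_def, Real.norm_eq_abs]
  exact max_le (Real.abs_le_sqrt (le_add_of_nonneg_right (sq_nonneg _)))
    (Real.le_sqrt_of_sq_le (le_add_of_nonneg_left (sq_nonneg _)))

lemma support_mollScaled_subset (hκ : 0 < κ) :
    support (mollScaled n c κ) ⊆ Metric.closedBall 0 κ := by
  intro y hy
  rw [Metric.mem_closedBall, dist_zero_right]
  by_contra! h
  have h1 : 1 ≤ ‖κ⁻¹ • y‖ := by
    rw [norm_smul, Real.norm_of_nonneg (inv_nonneg.2 hκ.le), le_inv_mul_iff₀ hκ, mul_one]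
    exact h.le
  exact hy (by rw [mollScaled, moll, if_neg (not_lt.2 (h1.trans (norm_le_eNorm _))), mul_zero])

lemma mollScaled_nonneg (hc : 0 ≤ c) (hκ : 0 ≤ κ) (y : ℝ × EuclideanSpace ℝ (Fin n)) :
    0 ≤ mollScaled n c κ y := by
  unfold mollScaled moll
  split_ifs <;> positivity

lemma integral_mollScaled (hκ : 0 < κ) :
    ∫ y, mollScaled n c κ y = ∫ x, moll n c x := by
  have hdim : Module.finrank ℝ (ℝ × EuclideanSpace ℝ (Fin n)) = n + 1 := by
    simp [Module.finrank_prod, add_comm]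
  have : (volume : Measure (ℝ × EuclideanSpace ℝ (Fin n))).IsAddHaarMeasure := by
    rw [Measure.volume_eq_prod]; infer_instance
  unfold mollScaled
  rw [integral_const_mul, Measure.integral_comp_inv_smul_of_nonneg _ _ hκ.le, hdim,
    smul_eq_mul, ← mul_assoc, inv_mul_cancel₀ (pow_ne_zero _ hκ.ne'), one_mul]

lemma integrable_mollScaled_mul (hκ : 0 < κ) (hnorm : ∫ x, moll n c x = 1)
    {g : ℝ × EuclideanSpace ℝ (Fin n) → ℝ} (hg : Continuous g) :
    Integrable fun y => mollScaled n c κ y * g y := by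
  have hψ : Integrable (mollScaled n c κ) :=
    Integrable.of_integral_ne_zero (by simp [integral_mollScaled hκ, hnorm])
  refine (integrableOn_iff_integrable_of_support_subset
    ((support_mul_subset_left _ _).trans (support_mollScaled_subset hκ))).1 ?_
  exact hψ.integrableOn.mul_continuousOn hg.continuousOn (isCompact_closedBall 0 κ)

end Mollifier

section BellQκ

variable {p q c κ : ℝ} {n : ℕ}

lemma abs_bellQκ_sub_le (hpq : p.HolderConjugate q) (hp : 2 ≤ p) (hc : 0 ≤ c) (hκ : 0 < κ)
    (hnorm : ∫ x, moll n c x = 1) {ξ ξ' : ℝ × EuclideanSpace ℝ (Fin n)} {K : ℝ}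
    (hK : ∀ y ∈ Metric.closedBall 0 κ, |bellQ p n (ξ' - y) - bellQ p n (ξ - y)| ≤ K) :
    |bellQκ p n c κ ξ' - bellQκ p n c κ ξ| ≤ K :=
  abs_integral_mul_sub_integral_mul_le (mollScaled_nonneg hc hκ.le)
    (by rw [integral_mollScaled hκ, hnorm]) (support_mollScaled_subset hκ)
    (integrable_mollScaled_mul hκ hnorm ((continuous_bellQ hpq hp).comp (by fun_prop)))
    (integrable_mollScaled_mul hκ hnorm ((continuous_bellQ hpq hp).comp (by fun_prop))) hK

lemma abs_deriv_bellQκ_fst_le (hpq : p.HolderConjugate q) (hp : 2 ≤ p) (hc : 0 ≤ c)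
    (hκ : 0 < κ) (hnorm : ∫ x, moll n c x = 1) (ζ : ℝ) (η : EuclideanSpace ℝ (Fin n)) :
    |deriv (fun z => bellQκ p n c κ (z, η)) ζ| ≤
      (p + 1) * ((|ζ| + 2 * κ) ^ (p - 1) + (‖η‖ + κ)) := by
  rw [← Real.norm_eq_abs]
  refine norm_deriv_le_of_lip' (by positivity) ?_
  filter_upwards [Metric.closedBall_mem_nhds ζ hκ] with z hz
  rw [Metric.mem_closedBall, Real.dist_eq] at hz
  refine abs_bellQκ_sub_le hpq hp hc hκ hnorm fun ⟨y₁, y₂⟩ hy => ?_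
  rw [mem_closedBall_zero_iff] at hy
  have hy₁ : |y₁| ≤ κ := (norm_fst_le (y₁, y₂)).trans hy
  have hy₂ : ‖y₂‖ ≤ κ := (norm_snd_le (y₁, y₂)).trans hy
  simpa using abs_bellQ_sub_fst_le hpq hp (a := z - y₁) (b := ζ - y₁) (w := η - y₂)
    (by linarith [abs_sub_le z ζ y₁, abs_sub ζ y₁] : _ ≤ |ζ| + 2 * κ) (by linarith [abs_sub ζ y₁])
    (by linarith [norm_sub_le η y₂] : _ ≤ ‖η‖ + κ)

lemma norm_fderiv_bellQκ_snd_le (hpq : p.HolderConjugate q) (hp : 2 ≤ p) (hc : 0 ≤ c)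
    (hκ : 0 < κ) (hnorm : ∫ x, moll n c x = 1) (ζ : ℝ) (η : EuclideanSpace ℝ (Fin n)) :
    ‖fderiv ℝ (fun w => bellQκ p n c κ (ζ, w)) η‖ ≤ (q + 1) * (‖η‖ + 2 * κ) ^ (q - 1) := by
  have hq := hpq.symm.pos
  refine norm_fderiv_le_of_lip' ℝ (by positivity) ?_
  filter_upwards [Metric.closedBall_mem_nhds η hκ] with w hw
  rw [Metric.mem_closedBall, dist_eq_norm] at hw
  refine abs_bellQκ_sub_le hpq hp hc hκ hnorm fun ⟨y₁, y₂⟩ hy => ?_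
  rw [mem_closedBall_zero_iff] at hy
  have hy₂ : ‖y₂‖ ≤ κ := (norm_snd_le (y₁, y₂)).trans hy
  simpa using abs_bellQ_sub_snd_le hpq hp (ζ - y₁) (w := w - y₂) (w' := η - y₂)
    (by linarith [norm_sub_le_norm_sub_add_norm_sub w η y₂, norm_sub_le η y₂] :
      _ ≤ ‖η‖ + 2 * κ)
    (by linarith [norm_sub_le η y₂])

end BellQκ

lemma add_two_mul_rpow_le {a κ r : ℝ} (ha : 0 ≤ a) (hκ : 0 ≤ κ) (hr : 0 ≤ r) :
    (a + 2 * κ) ^ r ≤ 2 ^ r * (a + κ) ^ r := by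
  rw [← Real.mul_rpow (by norm_num) (by positivity)]
  exact Real.rpow_le_rpow (by positivity) (by linarith) hr

theorem bellQκ_deriv_bounds_general (p q : ℝ) (hp : 2 ≤ p) (hq : q = p / (p - 1))
    (n : ℕ) (c : ℝ) (hc : 0 < c)
    (hnorm : ∫ x : ℝ × EuclideanSpace ℝ (Fin n), moll n c x = 1) :
    ∃ C > 0, ∀ κ ∈ Set.Ioo (0 : ℝ) 1, ∀ (ζ : ℝ) (η : EuclideanSpace ℝ (Fin n)),
      |deriv (fun z => bellQκ p n c κ (z, η)) ζ| ≤ C * max ((|ζ| + κ) ^ (p - 1)) (‖η‖ + κ) ∧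
      ‖fderiv ℝ (fun y => bellQκ p n c κ (ζ, y)) η‖ ≤ C * (‖η‖ + κ) ^ (q - 1) := by
  have hpq : p.HolderConjugate q := (Real.holderConjugate_iff_eq_conjExponent (by linarith)).2 hq
  have hq1 := hpq.symm.lt
  refine ⟨(p + 1) * (2 ^ (p - 1) + 1) + (q + 1) * 2 ^ (q - 1), by positivity,
    fun κ ⟨hκ, _⟩ ζ η => ⟨?_, ?_⟩⟩
  · set m := max ((|ζ| + κ) ^ (p - 1)) (‖η‖ + κ)
    calc |deriv (fun z => bellQκ p n c κ (z, η)) ζ|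
        ≤ (p + 1) * ((|ζ| + 2 * κ) ^ (p - 1) + (‖η‖ + κ)) :=
          abs_deriv_bellQκ_fst_le hpq hp hc.le hκ hnorm ζ η
      _ ≤ (p + 1) * (2 ^ (p - 1) * m + m) := by
          gcongr
          · exact (add_two_mul_rpow_le (abs_nonneg ζ) hκ.le (by linarith)).trans
              (by gcongr; exact le_max_left _ _)
          · exact le_max_right _ _
      _ = (p + 1) * (2 ^ (p - 1) + 1) * m := by ring
      _ ≤ ((p + 1) * (2 ^ (p - 1) + 1) + (q + 1) * 2 ^ (q - 1)) * m := by
          have : 0 ≤ m := le_max_of_le_right (by positivity)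
          gcongr
          exact le_add_of_nonneg_right (by positivity)
  · calc ‖fderiv ℝ (fun y => bellQκ p n c κ (ζ, y)) η‖
        ≤ (q + 1) * (‖η‖ + 2 * κ) ^ (q - 1) :=
          norm_fderiv_bellQκ_snd_le hpq hp hc.le hκ hnorm ζ η
      _ ≤ (q + 1) * 2 ^ (q - 1) * (‖η‖ + κ) ^ (q - 1) := by
          rw [mul_assoc]
          gcongr
          exact add_two_mul_rpow_le (norm_nonneg η) hκ.le (by linarith)
      _ ≤ ((p + 1) * (2 ^ (p - 1) + 1) + (q + 1) * 2 ^ (q - 1)) * (‖η‖ + κ) ^ (q - 1) := by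
          gcongr
          exact le_add_of_nonneg_left (by positivity)

/-- For `p ≥ 2`, `q = p/(p-1)`: there is `C = C(p) > 0` such that for
every `κ ∈ (0,1)` and every `(ζ,η) ∈ ℝ × ℝⁿ`, the mollified Bellman function satisfies
`|∂_ζ Q_κ(ζ,η)| ≤ C max{(|ζ|+κ)^{p-1}, |η|+κ}` and
`|∇_η Q_κ(ζ,η)| ≤ C (|η|+κ)^{q-1}`. -/
theorem bellQκ_deriv_bounds (p q δ : ℝ) (hp : 2 ≤ p) (hq : q = p / (p - 1))
    (hδ : δ = q * (q - 1) / 8) (n : ℕ) (c : ℝ) (hc : 0 < c)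
    (hnorm : ∫ x : ℝ × EuclideanSpace ℝ (Fin n), moll n c x = 1) :
    ∃ C > 0, ∀ κ ∈ Set.Ioo (0 : ℝ) 1, ∀ (ζ : ℝ) (η : EuclideanSpace ℝ (Fin n)),
      |deriv (fun z => bellQκ p n c κ (z, η)) ζ| ≤ C * max ((|ζ| + κ) ^ (p - 1)) (‖η‖ + κ) ∧
      ‖fderiv ℝ (fun y => bellQκ p n c κ (ζ, y)) η‖ ≤ C * (‖η‖ + κ) ^ (q - 1) :=
  bellQκ_deriv_bounds_general p q hp hq n c hc hnorm
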